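/- Let m ≥ 1 be an integer, let 0 < δ ≤ 1/4, let ℓ > 0 satisfy |A_c(m)| ≤ ℓ·c^{1/2+δ} for all integers c ≥ 1, and let x ≥ 10000 be a half-integer (x ∈ ℤ + 1/2). Then ∑_{⌊3x/4⌋ < c ≤ x−1/2} |A_c(m)|·c^{−3/2−δ}·(log(x/c))^{−1} ≤ 1.523·ℓ·log x, and ∑_{x+1/2 ≤ c ≤ ⌈5x/4⌉−1} |A_c(m)|·c^{−3/2−δ}·(log(c/x))^{−1} ≤ 1.142·ℓ·log x, where both sums range over positive integers c. -/

import Mathlib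

open Real Complex

/-- The Dedekind sum `s(d,c)`. -/
noncomputable def dedekindS (d c : ℕ) : ℝ :=
  ∑ r ∈ Finset.Ico 1 c,
    (r / c : ℝ) * ((d * r : ℝ) / c - ⌊(d * r : ℝ) / c⌋ - 1 / 2)

/-- The Kloosterman sum `A_c(n)`. -/
noncomputable def kloostermanA (c n : ℕ) : ℂ :=
  ∑ d ∈ (Finset.range c).filter (fun d => Nat.gcd d c = 1),
    Complex.exp (π * Complex.I * dedekindS d c) *
      Complex.exp (-2 * π * Complex.I * d * n / c)

/-- `τ(m)`: the number of positive divisors of `m`. -/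
def tau (m : ℕ) : ℕ := m.divisors.card

/-- The Riemann zeta function for real `s > 1`, given by its Dirichlet series. -/
noncomputable def zetaR (s : ℝ) : ℝ := ∑' n : ℕ, 1 / ((n : ℝ) + 1) ^ s

/-- `ω_o(c)`: the number of distinct odd primes dividing `c`. -/
def omegaOdd (c : ℕ) : ℕ := (c.primeFactors.filter (fun p => p ≠ 2)).card

open Finset

/-!
For `3x/4 < c < x` the bound `log (x/c) ≥ (x - c)/x` and the hypothesis on `A_c(m)` make each
term at most `(4/3) ℓ / (x - c)`; for `c > x`, `log (c/x) ≥ (c - x)/c` makes it at most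
`ℓ / (c - x)`. As `x` is a half-integer, the distances `|x - c|` of the integers `c` on one side
of `x` are distinct numbers `j + 1/2`, here all below `x/4`, and telescoping
`(j + 1/2)⁻¹ ≤ log (j + 1/2) - log (j - 1/2)` bounds the sum of their reciprocals by
`7/3 + log (x/4)`, which is at most `1.142 log x` for `x ≥ 10000`.
-/

lemma inv_log_div_le {a b : ℝ} (ha : 0 < a) (hab : a < b) : (Real.log (b / a))⁻¹ ≤ b / (b - a) := by
  have hb : 0 < b := ha.trans hab
  have hlog : (b - a) / b ≤ Real.log (b / a) := by
    simpa [inv_div, sub_div, div_self hb.ne'] using one_sub_inv_le_log_of_pos (div_pos hb ha)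
  simpa [inv_div] using inv_anti₀ (div_pos (sub_pos.2 hab) hb) hlog

lemma inv_le_log_sub_log_sub_one {s : ℝ} (hs : 1 < s) : s⁻¹ ≤ Real.log s - Real.log (s - 1) := by
  have h := one_sub_inv_le_log_of_pos (div_pos (by linarith : 0 < s) (by linarith : 0 < s - 1))
  rw [log_div (by linarith) (by linarith), inv_div] at h
  calc s⁻¹ = 1 - (s - 1) / s := by field_simp; ring
    _ ≤ _ := h

lemma sum_range_inv_add_half_le {n : ℕ} (hn : 2 ≤ n) :
    ∑ j ∈ range n, ((j : ℝ) + 1 / 2)⁻¹ ≤ 7 / 3 + Real.log (n - 1 / 2) := by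
  induction n, hn using Nat.le_induction with
  | base =>
    have h := one_sub_inv_le_log_of_pos (x := 3 / 2) (by norm_num)
    norm_num [sum_range_succ] at h ⊢
    linarith
  | succ n hn ih =>
    have h := inv_le_log_sub_log_sub_one (s := n + 1 / 2) (by
      have : (2 : ℝ) ≤ n := by exact_mod_cast hn
      linarith)
    rw [sum_range_succ]
    push_cast
    ring_nf at h ih ⊢
    linarith

lemma sum_inv_add_half_le {T : Finset ℕ} {y : ℝ} (hy : 3 / 2 ≤ y)
    (hT : ∀ j ∈ T, (j : ℝ) + 1 / 2 ≤ y) : ∑ j ∈ T, ((j : ℝ) + 1 / 2)⁻¹ ≤ 7 / 3 + Real.log y := by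
  have hTn : T ⊆ range ⌊y + 1 / 2⌋₊ := fun j hj =>
    mem_range.2 (Nat.le_floor (by push_cast; linarith [hT j hj]))
  have hn : 2 ≤ ⌊y + 1 / 2⌋₊ := Nat.le_floor (by push_cast; linarith)
  calc ∑ j ∈ T, ((j : ℝ) + 1 / 2)⁻¹ ≤ ∑ j ∈ range ⌊y + 1 / 2⌋₊, ((j : ℝ) + 1 / 2)⁻¹ :=
        sum_le_sum_of_subset_of_nonneg hTn fun _ _ _ => by positivity
    _ ≤ 7 / 3 + Real.log (⌊y + 1 / 2⌋₊ - 1 / 2) := sum_range_inv_add_half_le hn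
    _ ≤ 7 / 3 + Real.log y := by
        have h2 : (2 : ℝ) ≤ ⌊y + 1 / 2⌋₊ := by exact_mod_cast hn
        have hle := Nat.floor_le (by linarith : 0 ≤ y + 1 / 2)
        gcongr <;> linarith

section HalfIntegerCentre

variable {S : Finset ℕ} {K : ℕ} {x y : ℝ}

lemma sum_inv_sub_le_of_lt (hK : x = K + 1 / 2) (hy : 3 / 2 ≤ y)
    (hS : ∀ c ∈ S, (c : ℝ) < x ∧ x - c ≤ y) : ∑ c ∈ S, (x - c)⁻¹ ≤ 7 / 3 + Real.log y := by
  subst hK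
  have hcK : ∀ c ∈ S, c ≤ K := fun c hc =>
    Nat.lt_succ_iff.1 (by exact_mod_cast (by linarith [(hS c hc).1] : (c : ℝ) < K + 1))
  have hcast : ∀ c ∈ S, (K : ℝ) + 1 / 2 - c = ((K - c : ℕ) : ℝ) + 1 / 2 := fun c hc => by
    rw [Nat.cast_sub (hcK c hc)]; ring
  have hinj : Set.InjOn (K - ·) S := fun a ha b hb h => by
    have := hcK a ha; have := hcK b hb; simp only at h; omega
  rw [sum_congr rfl fun c hc => congrArg Inv.inv (hcast c hc),
    ← sum_image (f := fun j : ℕ => ((j : ℝ) + 1 / 2)⁻¹) hinj]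
  refine sum_inv_add_half_le hy ?_
  simp only [mem_image]
  rintro _ ⟨c, hc, rfl⟩
  linarith [hcast c hc, (hS c hc).2]

lemma sum_inv_sub_le_of_gt (hK : x = K + 1 / 2) (hy : 3 / 2 ≤ y)
    (hS : ∀ c ∈ S, x < c ∧ (c : ℝ) - x ≤ y) : ∑ c ∈ S, ((c : ℝ) - x)⁻¹ ≤ 7 / 3 + Real.log y := by
  subst hK
  have hcK : ∀ c ∈ S, K + 1 ≤ c := fun c hc =>
    Nat.succ_le_of_lt (by exact_mod_cast (by linarith [(hS c hc).1] : (K : ℝ) < c))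
  have hcast : ∀ c ∈ S, (c : ℝ) - (K + 1 / 2) = ((c - (K + 1) : ℕ) : ℝ) + 1 / 2 := fun c hc => by
    rw [Nat.cast_sub (hcK c hc)]; push_cast; ring
  have hinj : Set.InjOn (· - (K + 1)) S := fun a ha b hb h => by
    have := hcK a ha; have := hcK b hb; simp only at h; omega
  rw [sum_congr rfl fun c hc => congrArg Inv.inv (hcast c hc),
    ← sum_image (f := fun j : ℕ => ((j : ℝ) + 1 / 2)⁻¹) hinj]
  refine sum_inv_add_half_le hy ?_
  simp only [mem_image]
  rintro _ ⟨c, hc, rfl⟩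
  linarith [hcast c hc, (hS c hc).2]

end HalfIntegerCentre

lemma mul_rpow_le_div {A ℓ δ c : ℝ} (hc : 0 < c) (hA : A ≤ ℓ * c ^ ((1 : ℝ) / 2 + δ)) :
    A * c ^ (-(3 : ℝ) / 2 - δ) ≤ ℓ / c := by
  calc A * c ^ (-(3 : ℝ) / 2 - δ) ≤ ℓ * c ^ ((1 : ℝ) / 2 + δ) * c ^ (-(3 : ℝ) / 2 - δ) :=
        mul_le_mul_of_nonneg_right hA (rpow_nonneg hc.le _)
    _ = ℓ / c := by
        rw [mul_assoc, ← rpow_add hc, show (1 : ℝ) / 2 + δ + (-(3 : ℝ) / 2 - δ) = -1 by ring,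
          rpow_neg_one, div_eq_mul_inv]

section Terms

variable {A ℓ δ c x : ℝ}

lemma mul_rpow_mul_inv_log_le_of_lt (hℓ : 0 ≤ ℓ) (hA : A ≤ ℓ * c ^ ((1 : ℝ) / 2 + δ))
    (hc : 3 * x / 4 < c) (hcx : c < x) :
    A * c ^ (-(3 : ℝ) / 2 - δ) * (Real.log (x / c))⁻¹ ≤ 4 / 3 * ℓ * (x - c)⁻¹ := by
  have hc0 : 0 < c := by linarith
  calc A * c ^ (-(3 : ℝ) / 2 - δ) * (Real.log (x / c))⁻¹ ≤ ℓ / c * (x / (x - c)) :=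
        mul_le_mul (mul_rpow_le_div hc0 hA) (inv_log_div_le hc0 hcx)
          (inv_nonneg.2 (log_nonneg ((one_le_div hc0).2 hcx.le))) (div_nonneg hℓ hc0.le)
    _ = x / c * ℓ * (x - c)⁻¹ := by ring
    _ ≤ 4 / 3 * ℓ * (x - c)⁻¹ := by
        have hxc : x / c ≤ 4 / 3 := by rw [div_le_iff₀ hc0]; linarith
        exact mul_le_mul_of_nonneg_right (mul_le_mul_of_nonneg_right hxc hℓ)
          (inv_nonneg.2 (by linarith))

lemma mul_rpow_mul_inv_log_le_of_gt (hℓ : 0 ≤ ℓ) (hA : A ≤ ℓ * c ^ ((1 : ℝ) / 2 + δ))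
    (hx : 0 < x) (hxc : x < c) :
    A * c ^ (-(3 : ℝ) / 2 - δ) * (Real.log (c / x))⁻¹ ≤ ℓ * (c - x)⁻¹ := by
  have hc0 : 0 < c := hx.trans hxc
  calc A * c ^ (-(3 : ℝ) / 2 - δ) * (Real.log (c / x))⁻¹ ≤ ℓ / c * (c / (c - x)) :=
        mul_le_mul (mul_rpow_le_div hc0 hA) (inv_log_div_le hx hxc)
          (inv_nonneg.2 (log_nonneg ((one_le_div hx).2 hxc.le))) (div_nonneg hℓ hc0.le)
    _ = ℓ * (c - x)⁻¹ := by field_simp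

end Terms

lemma tsum_ite_le {ι : Type*} {p : ι → Prop} [DecidablePred p] {f : ι → ℝ} {M : ℝ} (hM : 0 ≤ M)
    (hS : ∀ S : Finset ι, (∀ c ∈ S, p c) → ∑ c ∈ S, f c ≤ M) :
    ∑' c, (if p c then f c else 0) ≤ M :=
  tsum_le_of_sum_le' hM fun s => by
    rw [← sum_filter]
    exact hS _ fun c hc => (mem_filter.1 hc).2

section MiddleSums

variable {a : ℕ → ℝ} {ℓ δ x : ℝ} {K : ℕ}

lemma tsum_below_le (hℓ : 0 ≤ ℓ) (ha : ∀ c : ℕ, 1 ≤ c → a c ≤ ℓ * (c : ℝ) ^ ((1 : ℝ) / 2 + δ))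
    (hK : x = K + 1 / 2) (hx : 6 ≤ x) :
    (∑' c : ℕ, if 3 * x / 4 < (c : ℝ) ∧ (c : ℝ) ≤ x - 1 / 2 then
        a c * (c : ℝ) ^ (-(3 : ℝ) / 2 - δ) * (Real.log (x / c))⁻¹ else 0) ≤
      4 / 3 * ℓ * (7 / 3 + Real.log (x / 4)) := by
  have hlog : 0 ≤ Real.log (x / 4) := log_nonneg (by linarith)
  refine tsum_ite_le (by positivity) fun S hS => ?_
  calc _ ≤ ∑ c ∈ S, 4 / 3 * ℓ * (x - c)⁻¹ := sum_le_sum fun c hc => by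
        obtain ⟨hlo, hhi⟩ := hS c hc
        have hc1 : 1 ≤ c := by exact_mod_cast (by linarith : (1 : ℝ) ≤ c)
        exact mul_rpow_mul_inv_log_le_of_lt hℓ (ha c hc1) hlo (by linarith)
    _ = 4 / 3 * ℓ * ∑ c ∈ S, (x - c)⁻¹ := by rw [mul_sum]
    _ ≤ 4 / 3 * ℓ * (7 / 3 + Real.log (x / 4)) := by
        gcongr
        exact sum_inv_sub_le_of_lt hK (by linarith) fun c hc => by
          obtain ⟨hlo, hhi⟩ := hS c hc
          constructor <;> linarith

lemma tsum_above_le (hℓ : 0 ≤ ℓ) (ha : ∀ c : ℕ, 1 ≤ c → a c ≤ ℓ * (c : ℝ) ^ ((1 : ℝ) / 2 + δ))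
    (hK : x = K + 1 / 2) (hx : 6 ≤ x) :
    (∑' c : ℕ, if x + 1 / 2 ≤ (c : ℝ) ∧ (c : ℝ) ≤ (⌈5 * x / 4⌉₊ : ℝ) - 1 then
        a c * (c : ℝ) ^ (-(3 : ℝ) / 2 - δ) * (Real.log ((c : ℝ) / x))⁻¹ else 0) ≤
      ℓ * (7 / 3 + Real.log (x / 4)) := by
  have hlog : 0 ≤ Real.log (x / 4) := log_nonneg (by linarith)
  have hceil := Nat.ceil_lt_add_one (by linarith : 0 ≤ 5 * x / 4)
  refine tsum_ite_le (by positivity) fun S hS => ?_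
  calc _ ≤ ∑ c ∈ S, ℓ * ((c : ℝ) - x)⁻¹ := sum_le_sum fun c hc => by
        obtain ⟨hlo, hhi⟩ := hS c hc
        have hc1 : 1 ≤ c := by exact_mod_cast (by linarith : (1 : ℝ) ≤ c)
        exact mul_rpow_mul_inv_log_le_of_gt hℓ (ha c hc1) (by linarith) (by linarith)
    _ = ℓ * ∑ c ∈ S, ((c : ℝ) - x)⁻¹ := by rw [mul_sum]
    _ ≤ ℓ * (7 / 3 + Real.log (x / 4)) := by
        gcongr
        exact sum_inv_sub_le_of_gt hK (by linarith) fun c hc => by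
          obtain ⟨hlo, hhi⟩ := hS c hc
          constructor <;> linarith

end MiddleSums

lemma seven_thirds_add_log_div_four_le {x : ℝ} (hx : 10000 ≤ x) :
    7 / 3 + Real.log (x / 4) ≤ 1.142 * Real.log x := by
  have h2 := log_two_gt_d9
  have hx13 : 13 * Real.log 2 ≤ Real.log x := by
    calc 13 * Real.log 2 = Real.log (2 ^ 13) := by rw [log_pow]; norm_num
      _ ≤ Real.log x := log_le_log (by norm_num) (by linarith)
  have hx4 : Real.log (x / 4) = Real.log x - 2 * Real.log 2 := by
    rw [log_div (by linarith) (by norm_num), show (4 : ℝ) = 2 ^ 2 by norm_num, log_pow]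
    norm_num
  linarith

lemma exists_nat_eq_add_half {x : ℝ} (hx : 0 ≤ x) (h : ∃ k : ℤ, x = k + 1 / 2) :
    ∃ K : ℕ, x = K + 1 / 2 := by
  obtain ⟨k, rfl⟩ := h
  lift k to ℕ using (by
    have : (-1 : ℝ) < k := by linarith
    have : (-1 : ℤ) < k := by exact_mod_cast this
    omega)
  exact ⟨k, by push_cast; rfl⟩

theorem kloosterman_middle_sums_bound_general (m : ℕ) (δ : ℝ)
    (ℓ : ℝ) (hℓ0 : 0 < ℓ)
    (hℓ : ∀ c : ℕ, 1 ≤ c → ‖kloostermanA c m‖ ≤ ℓ * (c : ℝ) ^ ((1 : ℝ) / 2 + δ))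
    (x : ℝ) (hx : 10000 ≤ x) (hhalf : ∃ k : ℤ, x = k + 1 / 2) :
    (∑' c : ℕ, if 3 * x / 4 < (c : ℝ) ∧ (c : ℝ) ≤ x - 1 / 2 then
        ‖kloostermanA c m‖ * (c : ℝ) ^ (-(3 : ℝ) / 2 - δ) * (Real.log (x / c))⁻¹
      else 0) ≤ 1.523 * ℓ * Real.log x ∧
    (∑' c : ℕ, if x + 1 / 2 ≤ (c : ℝ) ∧ (c : ℝ) ≤ (⌈5 * x / 4⌉₊ : ℝ) - 1 then
        ‖kloostermanA c m‖ * (c : ℝ) ^ (-(3 : ℝ) / 2 - δ) * (Real.log ((c : ℝ) / x))⁻¹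
      else 0) ≤ 1.142 * ℓ * Real.log x := by
  obtain ⟨K, hK⟩ := exists_nat_eq_add_half (by linarith) hhalf
  have hlog := seven_thirds_add_log_div_four_le hx
  have hlog0 : 0 ≤ Real.log x := log_nonneg (by linarith)
  constructor
  · calc _ ≤ 4 / 3 * ℓ * (7 / 3 + Real.log (x / 4)) := tsum_below_le hℓ0.le hℓ hK (by linarith)
      _ ≤ 1.523 * ℓ * Real.log x := by nlinarith
  · calc _ ≤ ℓ * (7 / 3 + Real.log (x / 4)) := tsum_above_le hℓ0.le hℓ hK (by linarith)
      _ ≤ 1.142 * ℓ * Real.log x := by nlinarith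

theorem kloosterman_middle_sums_bound (m : ℕ) (hm : 1 ≤ m) (δ : ℝ) (hδ0 : 0 < δ)
    (hδ : δ ≤ 1 / 4) (ℓ : ℝ) (hℓ0 : 0 < ℓ)
    (hℓ : ∀ c : ℕ, 1 ≤ c → ‖kloostermanA c m‖ ≤ ℓ * (c : ℝ) ^ ((1 : ℝ) / 2 + δ))
    (x : ℝ) (hx : 10000 ≤ x) (hhalf : ∃ k : ℤ, x = k + 1 / 2) :
    (∑' c : ℕ, if 3 * x / 4 < (c : ℝ) ∧ (c : ℝ) ≤ x - 1 / 2 then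
        ‖kloostermanA c m‖ * (c : ℝ) ^ (-(3 : ℝ) / 2 - δ) * (Real.log (x / c))⁻¹
      else 0) ≤ 1.523 * ℓ * Real.log x ∧
    (∑' c : ℕ, if x + 1 / 2 ≤ (c : ℝ) ∧ (c : ℝ) ≤ (⌈5 * x / 4⌉₊ : ℝ) - 1 then
        ‖kloostermanA c m‖ * (c : ℝ) ^ (-(3 : ℝ) / 2 - δ) * (Real.log ((c : ℝ) / x))⁻¹
      else 0) ≤ 1.142 * ℓ * Real.log x :=
  kloosterman_middle_sums_bound_general m δ ℓ hℓ0 hℓ x hx hhalf
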